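/- In a two-terminal series-parallel graph G, for any edge tolls τ ∈ ℝ≥0^E there exist canonical tolls α ∈ ℝ≥0^E such that (i) τ(P) = α(P) for every s-t path P, and (ii) for every subgraph H of the decomposition tree and every edge e = (s_H, v) ∈ E(H) leaving the source terminal of H, α_e ≥ min over s_H-t_H paths P in H of α(P). -/

import Mathlib

/-- Two-terminal series-parallel graphs, given by their binary decomposition tree. -/
inductive SPG : Type
  | edge : SPG
  | series : SPG → SPG → SPG
  | parallel : SPG → SPG → SPG

namespace SPG

/-- The edge set of a series-parallel graph (the leaves of the decomposition tree). -/
def E : SPG → Type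
  | .edge => Unit
  | .series a b => a.E ⊕ b.E
  | .parallel a b => a.E ⊕ b.E

/-- The `s`-`t` paths of a series-parallel graph. -/
def Path : SPG → Type
  | .edge => Unit
  | .series a b => a.Path × b.Path
  | .parallel a b => a.Path ⊕ b.Path

/-- The cost `c(P) = Σ_{e ∈ P} c_e` of a path under edge costs `c`. -/
def pathCost : (G : SPG) → (G.E → ℝ) → G.Path → ℝ
  | .edge, c, _ => c ()
  | .series a b, c, P => a.pathCost (c ∘ Sum.inl) P.1 + b.pathCost (c ∘ Sum.inr) P.2
  | .parallel a _, c, .inl P => a.pathCost (c ∘ Sum.inl) P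
  | .parallel _ b, c, .inr P => b.pathCost (c ∘ Sum.inr) P

/-- The minimum of `c(P)` over all `s`-`t` paths `P` of `G`. -/
def minPathCost : (G : SPG) → (G.E → ℝ) → ℝ
  | .edge, c => c ()
  | .series a b, c => a.minPathCost (c ∘ Sum.inl) + b.minPathCost (c ∘ Sum.inr)
  | .parallel a b, c => min (a.minPathCost (c ∘ Sum.inl)) (b.minPathCost (c ∘ Sum.inr))

/-- `e` is an edge leaving the source terminal of `G`. -/
def isSourceEdge : (G : SPG) → G.E → Prop
  | .edge, _ => True
  | .series a _, e => match e with
      | .inl e => a.isSourceEdge e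
      | .inr _ => False
  | .parallel a b, e => match e with
      | .inl e => a.isSourceEdge e
      | .inr e => b.isSourceEdge e

/-- Canonical tolls: for every subgraph `H` of the decomposition tree and every edge
`e` leaving the source terminal `s_H` of `H`, `α_e ≥ min_{P ∈ 𝒫(H)} α(P)`. -/
def Canonical : (G : SPG) → (G.E → ℝ) → Prop
  | .edge, _ => True
  | .series a b, τ =>
      (∀ e, a.isSourceEdge e →
        a.minPathCost (τ ∘ Sum.inl) + b.minPathCost (τ ∘ Sum.inr) ≤ τ (Sum.inl e)) ∧
      a.Canonical (τ ∘ Sum.inl) ∧ b.Canonical (τ ∘ Sum.inr)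
  | .parallel a b, τ =>
      (∀ e, a.isSourceEdge e →
        min (a.minPathCost (τ ∘ Sum.inl)) (b.minPathCost (τ ∘ Sum.inr)) ≤ τ (Sum.inl e)) ∧
      (∀ e, b.isSourceEdge e →
        min (a.minPathCost (τ ∘ Sum.inl)) (b.minPathCost (τ ∘ Sum.inr)) ≤ τ (Sum.inr e)) ∧
      a.Canonical (τ ∘ Sum.inl) ∧ b.Canonical (τ ∘ Sum.inr)

end SPG

/-!
Induct on the decomposition tree. A parallel join keeps the canonical tolls of both sides. For a
series join of `H₁` and `H₂` with canonical tolls `α¹`, `α²`, move `δ = min_P α²(P)` from the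
source edges of `H₂` to those of `H₁`: every `s`-`t` path crosses exactly one source edge of each
part, so path costs do not change, and the new cheapest `H₂`-path costs `0`, so the source edges
of `H₁` dominate the cheapest path of the whole graph. The tolls stay nonnegative because
canonical tolls of `H₂` are at least `δ` on its source edges.
-/

namespace SPG

def addToSource : (G : SPG) → ℝ → (G.E → ℝ) → G.E → ℝ
  | .edge, δ, c, _ => c () + δ
  | .series a _, δ, c, .inl e => a.addToSource δ (c ∘ Sum.inl) e
  | .series _ _, _, c, .inr e => c (Sum.inr e)
  | .parallel a _, δ, c, .inl e => a.addToSource δ (c ∘ Sum.inl) e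
  | .parallel _ b, δ, c, .inr e => b.addToSource δ (c ∘ Sum.inr) e

section addToSource

variable (a b : SPG) (δ : ℝ)

@[simp]
lemma addToSource_series_comp_inl (c : (series a b).E → ℝ) :
    (series a b).addToSource δ c ∘ Sum.inl = a.addToSource δ (c ∘ Sum.inl) := rfl

@[simp]
lemma addToSource_series_comp_inr (c : (series a b).E → ℝ) :
    (series a b).addToSource δ c ∘ Sum.inr = c ∘ Sum.inr := rfl

@[simp]
lemma addToSource_parallel_comp_inl (c : (parallel a b).E → ℝ) :
    (parallel a b).addToSource δ c ∘ Sum.inl = a.addToSource δ (c ∘ Sum.inl) := rfl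

@[simp]
lemma addToSource_parallel_comp_inr (c : (parallel a b).E → ℝ) :
    (parallel a b).addToSource δ c ∘ Sum.inr = b.addToSource δ (c ∘ Sum.inr) := rfl

end addToSource

lemma addToSource_eq_or : ∀ (G : SPG) (δ : ℝ) (c : G.E → ℝ) (e : G.E),
    G.addToSource δ c e = c e ∨ (G.isSourceEdge e ∧ G.addToSource δ c e = c e + δ)
  | .edge, _, _, _ => Or.inr ⟨trivial, rfl⟩
  | .series a _, δ, c, .inl e => addToSource_eq_or a δ (c ∘ Sum.inl) e
  | .series _ _, _, _, .inr _ => Or.inl rfl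
  | .parallel a _, δ, c, .inl e => addToSource_eq_or a δ (c ∘ Sum.inl) e
  | .parallel _ b, δ, c, .inr e => addToSource_eq_or b δ (c ∘ Sum.inr) e

lemma addToSource_of_isSourceEdge : ∀ {G : SPG} (δ : ℝ) (c : G.E → ℝ) {e : G.E},
    G.isSourceEdge e → G.addToSource δ c e = c e + δ
  | .edge, _, _, _, _ => rfl
  | .series a _, δ, c, .inl _, he => addToSource_of_isSourceEdge (G := a) δ (c ∘ Sum.inl) he
  | .series _ _, _, _, .inr _, he => he.elim
  | .parallel a _, δ, c, .inl _, he => addToSource_of_isSourceEdge (G := a) δ (c ∘ Sum.inl) he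
  | .parallel _ b, δ, c, .inr _, he => addToSource_of_isSourceEdge (G := b) δ (c ∘ Sum.inr) he

lemma pathCost_addToSource : ∀ (G : SPG) (δ : ℝ) (c : G.E → ℝ) (P : G.Path),
    G.pathCost (G.addToSource δ c) P = G.pathCost c P + δ
  | .edge, _, _, _ => rfl
  | .series a _, δ, c, P => by
      simp only [pathCost, addToSource_series_comp_inl, addToSource_series_comp_inr,
        pathCost_addToSource a δ _ P.1]
      ring
  | .parallel a _, δ, c, .inl P => pathCost_addToSource a δ (c ∘ Sum.inl) P
  | .parallel _ b, δ, c, .inr P => pathCost_addToSource b δ (c ∘ Sum.inr) P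

lemma minPathCost_addToSource : ∀ (G : SPG) (δ : ℝ) (c : G.E → ℝ),
    G.minPathCost (G.addToSource δ c) = G.minPathCost c + δ
  | .edge, _, _ => rfl
  | .series a _, δ, c => by
      simp only [minPathCost, addToSource_series_comp_inl, addToSource_series_comp_inr,
        minPathCost_addToSource a δ]
      ring
  | .parallel a b, δ, c => by
      simp only [minPathCost, addToSource_parallel_comp_inl, addToSource_parallel_comp_inr,
        minPathCost_addToSource a δ, minPathCost_addToSource b δ, min_add_add_right]

lemma addToSource_nonneg {G : SPG} {δ : ℝ} {c : G.E → ℝ} (hδ : 0 ≤ δ) (hc : ∀ e, 0 ≤ c e)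
    (e : G.E) : 0 ≤ G.addToSource δ c e := by
  rcases G.addToSource_eq_or δ c e with h | ⟨-, h⟩ <;> rw [h] <;> linarith [hc e]

lemma minPathCost_nonneg : ∀ {G : SPG} {c : G.E → ℝ}, (∀ e, 0 ≤ c e) → 0 ≤ G.minPathCost c
  | .edge, _, hc => hc ()
  | .series _ _, _, hc =>
      add_nonneg (minPathCost_nonneg fun e => hc (Sum.inl e))
        (minPathCost_nonneg fun e => hc (Sum.inr e))
  | .parallel _ _, _, hc =>
      le_min (minPathCost_nonneg fun e => hc (Sum.inl e))
        (minPathCost_nonneg fun e => hc (Sum.inr e))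

namespace Canonical

lemma minPathCost_le : ∀ {G : SPG} {c : G.E → ℝ}, G.Canonical c →
    ∀ {e : G.E}, G.isSourceEdge e → G.minPathCost c ≤ c e
  | .edge, _, _, _, _ => le_rfl
  | .series _ _, _, ⟨h, _⟩, .inl e, he => h e he
  | .series _ _, _, _, .inr _, he => he.elim
  | .parallel _ _, _, ⟨h, _⟩, .inl e, he => h e he
  | .parallel _ _, _, ⟨_, h, _⟩, .inr e, he => h e he

lemma addToSource : ∀ {G : SPG} {c : G.E → ℝ}, G.Canonical c →
    ∀ δ, G.Canonical (G.addToSource δ c)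
  | .edge, _, _, _ => trivial
  | .series a _, c, ⟨hsrc, ha, hb⟩, δ => by
      refine ⟨fun e he => ?_, ha.addToSource δ, hb⟩
      rw [addToSource_series_comp_inl, addToSource_series_comp_inr, minPathCost_addToSource]
      change _ ≤ a.addToSource δ (c ∘ Sum.inl) e
      rw [addToSource_of_isSourceEdge δ _ he]
      show _ ≤ c (Sum.inl e) + δ
      linarith [hsrc e he]
  | .parallel a b, c, ⟨hsa, hsb, ha, hb⟩, δ => by
      refine ⟨fun e he => ?_, fun e he => ?_, ha.addToSource δ, hb.addToSource δ⟩
      all_goals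
        rw [addToSource_parallel_comp_inl, addToSource_parallel_comp_inr,
          minPathCost_addToSource, minPathCost_addToSource, min_add_add_right]
      · change _ ≤ a.addToSource δ (c ∘ Sum.inl) e
        rw [addToSource_of_isSourceEdge δ _ he]
        show _ ≤ c (Sum.inl e) + δ
        linarith [hsa e he]
      · change _ ≤ b.addToSource δ (c ∘ Sum.inr) e
        rw [addToSource_of_isSourceEdge δ _ he]
        show _ ≤ c (Sum.inr e) + δ
        linarith [hsb e he]

lemma addToSource_neg_minPathCost_nonneg {G : SPG} {c : G.E → ℝ} (hcan : G.Canonical c)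
    (hc : ∀ e, 0 ≤ c e) (e : G.E) : 0 ≤ G.addToSource (-G.minPathCost c) c e := by
  rcases G.addToSource_eq_or (-G.minPathCost c) c e with h | ⟨he, h⟩ <;> rw [h]
  · exact hc e
  · linarith [hcan.minPathCost_le he]

end Canonical

def canonicalTolls : (G : SPG) → (G.E → ℝ) → G.E → ℝ
  | .edge, c => c
  | .series a b, c =>
      let δ := b.minPathCost (b.canonicalTolls (c ∘ Sum.inr))
      Sum.elim (a.addToSource δ (a.canonicalTolls (c ∘ Sum.inl)))
        (b.addToSource (-δ) (b.canonicalTolls (c ∘ Sum.inr)))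
  | .parallel a b, c => Sum.elim (a.canonicalTolls (c ∘ Sum.inl)) (b.canonicalTolls (c ∘ Sum.inr))

section canonicalTolls

variable (a b : SPG)

@[simp]
lemma canonicalTolls_series_comp_inl (c : (series a b).E → ℝ) :
    (series a b).canonicalTolls c ∘ Sum.inl =
      a.addToSource (b.minPathCost (b.canonicalTolls (c ∘ Sum.inr)))
        (a.canonicalTolls (c ∘ Sum.inl)) := rfl

@[simp]
lemma canonicalTolls_series_comp_inr (c : (series a b).E → ℝ) :
    (series a b).canonicalTolls c ∘ Sum.inr =
      b.addToSource (-b.minPathCost (b.canonicalTolls (c ∘ Sum.inr)))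
        (b.canonicalTolls (c ∘ Sum.inr)) := rfl

@[simp]
lemma canonicalTolls_parallel_comp_inl (c : (parallel a b).E → ℝ) :
    (parallel a b).canonicalTolls c ∘ Sum.inl = a.canonicalTolls (c ∘ Sum.inl) := rfl

@[simp]
lemma canonicalTolls_parallel_comp_inr (c : (parallel a b).E → ℝ) :
    (parallel a b).canonicalTolls c ∘ Sum.inr = b.canonicalTolls (c ∘ Sum.inr) := rfl

end canonicalTolls

lemma pathCost_canonicalTolls : ∀ (G : SPG) (c : G.E → ℝ) (P : G.Path),
    G.pathCost (G.canonicalTolls c) P = G.pathCost c P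
  | .edge, _, _ => rfl
  | .series a b, c, P => by
      simp only [pathCost, canonicalTolls_series_comp_inl, canonicalTolls_series_comp_inr,
        pathCost_addToSource, pathCost_canonicalTolls a _ P.1, pathCost_canonicalTolls b _ P.2]
      ring
  | .parallel a _, c, .inl P => pathCost_canonicalTolls a (c ∘ Sum.inl) P
  | .parallel _ b, c, .inr P => pathCost_canonicalTolls b (c ∘ Sum.inr) P

lemma canonical_canonicalTolls : ∀ (G : SPG) (c : G.E → ℝ), G.Canonical (G.canonicalTolls c)
  | .edge, _ => trivial
  | .series a b, c => by
      have ha := canonical_canonicalTolls a (c ∘ Sum.inl)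
      have hb := canonical_canonicalTolls b (c ∘ Sum.inr)
      refine ⟨fun e he => ?_, ha.addToSource _, hb.addToSource _⟩
      rw [canonicalTolls_series_comp_inl, canonicalTolls_series_comp_inr,
        minPathCost_addToSource, minPathCost_addToSource]
      change _ ≤ a.addToSource _ (a.canonicalTolls (c ∘ Sum.inl)) e
      rw [addToSource_of_isSourceEdge _ _ he]
      linarith [ha.minPathCost_le he]
  | .parallel a b, c => by
      have ha := canonical_canonicalTolls a (c ∘ Sum.inl)
      have hb := canonical_canonicalTolls b (c ∘ Sum.inr)
      refine ⟨fun e he => ?_, fun e he => ?_, ha, hb⟩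
      · exact (min_le_left _ _).trans (ha.minPathCost_le he)
      · exact (min_le_right _ _).trans (hb.minPathCost_le he)

lemma canonicalTolls_nonneg : ∀ {G : SPG} {c : G.E → ℝ}, (∀ e, 0 ≤ c e) →
    ∀ e, 0 ≤ G.canonicalTolls c e
  | .edge, _, hc, e => hc e
  | .series _ _, _, hc, .inl e =>
      addToSource_nonneg (minPathCost_nonneg (canonicalTolls_nonneg fun e => hc (Sum.inr e)))
        (canonicalTolls_nonneg fun e => hc (Sum.inl e)) e
  | .series _ _, _, hc, .inr e =>
      (canonical_canonicalTolls _ _).addToSource_neg_minPathCost_nonneg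
        (canonicalTolls_nonneg fun e => hc (Sum.inr e)) e
  | .parallel _ _, _, hc, .inl e => canonicalTolls_nonneg (fun e => hc (Sum.inl e)) e
  | .parallel _ _, _, hc, .inr e => canonicalTolls_nonneg (fun e => hc (Sum.inr e)) e

end SPG

/-- Claim 4.2: any nonnegative edge tolls `τ` on a series-parallel graph can be
converted into nonnegative canonical tolls `α` with the same cost on every
`s`-`t` path. -/
theorem spg_canonical_tolls (G : SPG) (τ : G.E → ℝ) (hτ : ∀ e, 0 ≤ τ e) :
    ∃ α : G.E → ℝ, (∀ e, 0 ≤ α e) ∧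
      (∀ P : G.Path, G.pathCost α P = G.pathCost τ P) ∧
      G.Canonical α :=
  ⟨G.canonicalTolls τ, SPG.canonicalTolls_nonneg hτ, G.pathCost_canonicalTolls τ,
    G.canonical_canonicalTolls τ⟩
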